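/- (Motzkin–Straus) Let A be the adjacency matrix of a finite simple graph g with clique number ω(g) ≥ 1. Then the maximum of x^T A x over the probability simplex equals 1 - 1/ω(g). -/

import Mathlib

/-!
If `a` and `b` are non-adjacent vertices, moving the weight `t` from `b` to `a` changes
`xᵀAx` by `2t((Ax)_a - (Ax)_b)` only, since `(e_a - e_b)ᵀA(e_a - e_b) = 0`; moving all the
weight of the one with the smaller `(Ax)` onto the other therefore does not decrease the form
and shrinks the support. Repeating this, every point of the simplex is dominated by one supported
on a clique `s`, where `xᵀAx = 1 - ∑ xᵢ² ≤ 1 - 1/|s|` by Cauchy–Schwarz, with equality for the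
uniform vector on a maximum clique.
-/

open Matrix Finset

theorem sq_sum_le_card_support_mul_sum_sq {ι : Type*} [Fintype ι] (x : ι → ℝ) :
    (∑ i, x i) ^ 2 ≤ #{i | x i ≠ 0} * ∑ i, x i ^ 2 := by
  rw [← sum_filter_ne_zero, ← sum_filter_of_ne (f := fun i => x i ^ 2) (p := (x · ≠ 0))
    fun _ _ h => by simpa using h]
  exact sq_sum_le_card_mul_sum_sq

theorem Matrix.IsSymm.add_dotProduct_mulVec_add {n R : Type*} [Fintype n] [CommRing R]
    {A : Matrix n n R} (hA : A.IsSymm) (x d : n → R) :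
    (x + d) ⬝ᵥ A *ᵥ (x + d) = x ⬝ᵥ A *ᵥ x + 2 * (d ⬝ᵥ A *ᵥ x) + d ⬝ᵥ A *ᵥ d := by
  have hswap : x ⬝ᵥ A *ᵥ d = d ⬝ᵥ A *ᵥ x := by
    rw [dotProduct_mulVec, ← mulVec_transpose, hA.eq, dotProduct_comm]
  simp only [mulVec_add, add_dotProduct, dotProduct_add, hswap]
  ring

namespace SimpleGraph

variable {V : Type*} [Fintype V] (G : SimpleGraph V) [DecidableRel G.Adj]

section Transfer

variable [DecidableEq V] {a b : V}

theorem dotProduct_adjMatrix_mulVec_transfer (hnadj : ¬G.Adj a b) (x : V → ℝ) (t : ℝ) :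
    (x + (Pi.single a t - Pi.single b t)) ⬝ᵥ
        G.adjMatrix ℝ *ᵥ (x + (Pi.single a t - Pi.single b t)) =
      x ⬝ᵥ G.adjMatrix ℝ *ᵥ x + 2 * t * ((G.adjMatrix ℝ *ᵥ x) a - (G.adjMatrix ℝ *ᵥ x) b) := by
  rw [G.isSymm_adjMatrix.add_dotProduct_mulVec_add]
  have hnadj' : ¬G.Adj b a := fun h => hnadj h.symm
  simp [sub_dotProduct, mulVec_sub, single_dotProduct, mulVec_single, hnadj, hnadj']
  ring

theorem exists_transfer_mem_stdSimplex {x : V → ℝ} (hx : x ∈ stdSimplex ℝ V) (hab : a ≠ b)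
    (hnadj : ¬G.Adj a b) (ha : x a ≠ 0) (hb : x b ≠ 0) :
    ∃ y ∈ stdSimplex ℝ V, Function.support y ⊂ Function.support x ∧
      x ⬝ᵥ G.adjMatrix ℝ *ᵥ x ≤ y ⬝ᵥ G.adjMatrix ℝ *ᵥ y := by
  wlog hle : (G.adjMatrix ℝ *ᵥ x) b ≤ (G.adjMatrix ℝ *ᵥ x) a generalizing a b
  · exact this hab.symm (fun h => hnadj h.symm) hb ha (le_of_not_ge hle)
  set y := x + (Pi.single a (x b) - Pi.single b (x b))
  have hya : y a = x a + x b := by simp [y, hab]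
  have hyb : y b = 0 := by simp [y, hab.symm]
  have hyi : ∀ i, i ≠ a → i ≠ b → y i = x i := fun i hia hib => by simp [y, hia, hib]
  refine ⟨y, ⟨fun i => ?_, ?_⟩, ?_, ?_⟩
  · by_cases hia : i = a
    · subst hia; rw [hya]; exact add_nonneg (hx.1 i) (hx.1 b)
    by_cases hib : i = b
    · rw [hib, hyb]
    · rw [hyi i hia hib]; exact hx.1 i
  · simp [y, sum_add_distrib, hx.2]
  · refine (Set.ssubset_iff_of_subset fun i hi => ?_).2 ⟨b, hb, by simp [hyb]⟩
    by_cases hia : i = a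
    · rwa [hia]
    by_cases hib : i = b
    · exact absurd (hib ▸ hyb) hi
    · rwa [Function.mem_support, ← hyi i hia hib]
  · rw [G.dotProduct_adjMatrix_mulVec_transfer hnadj]
    have := mul_nonneg (hx.1 b) (sub_nonneg.2 hle)
    linarith

end Transfer

theorem exists_isClique_support_le {x : V → ℝ} (hx : x ∈ stdSimplex ℝ V) :
    ∃ y ∈ stdSimplex ℝ V, G.IsClique (Function.support y) ∧
      x ⬝ᵥ G.adjMatrix ℝ *ᵥ x ≤ y ⬝ᵥ G.adjMatrix ℝ *ᵥ y := by
  classical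
  induction hn : (Function.support x).ncard using Nat.strong_induction_on generalizing x with
  | _ n ih =>
  by_cases hcl : G.IsClique (Function.support x)
  · exact ⟨x, hx, hcl, le_rfl⟩
  obtain ⟨a, ha, b, hb, hab, hnadj⟩ :
      ∃ a ∈ Function.support x, ∃ b ∈ Function.support x, a ≠ b ∧ ¬G.Adj a b := by
    simpa [IsClique, Set.Pairwise] using hcl
  obtain ⟨y, hy, hyx, hxy⟩ := G.exists_transfer_mem_stdSimplex hx hab hnadj ha hb
  obtain ⟨z, hz, hzcl, hyz⟩ := ih _ (hn ▸ Set.ncard_lt_ncard hyx) hy rfl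
  exact ⟨z, hz, hzcl, hxy.trans hyz⟩

variable {G} {x : V → ℝ}

theorem adjMatrix_mulVec_apply_of_isClique_support (hx : G.IsClique (Function.support x))
    {i : V} (hi : x i ≠ 0) :
    (G.adjMatrix ℝ *ᵥ x) i = ∑ j, x j - x i := by
  classical
  rw [mulVec, dotProduct, ← add_sum_erase _ _ (mem_univ i), ← add_sum_erase _ _ (mem_univ i)]
  simp only [adjMatrix_apply, SimpleGraph.irrefl, if_false, zero_mul, zero_add, add_sub_cancel_left]
  refine sum_congr rfl fun j hj => ?_
  by_cases hj0 : x j = 0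
  · simp [hj0]
  · simp [hx hi hj0 (ne_of_mem_erase hj).symm]

theorem dotProduct_adjMatrix_mulVec_of_isClique_support (hx : G.IsClique (Function.support x)) :
    x ⬝ᵥ G.adjMatrix ℝ *ᵥ x = (∑ i, x i) ^ 2 - ∑ i, x i ^ 2 := by
  have hterm : ∀ i, x i * (G.adjMatrix ℝ *ᵥ x) i = x i * (∑ j, x j - x i) := fun i => by
    by_cases hi : x i = 0
    · simp [hi]
    · rw [adjMatrix_mulVec_apply_of_isClique_support hx hi]
  simp only [dotProduct, hterm, mul_sub, sum_sub_distrib, ← sum_mul, sq]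

theorem dotProduct_adjMatrix_mulVec_le_one_sub_one_div_cliqueNum (hx : x ∈ stdSimplex ℝ V) :
    x ⬝ᵥ G.adjMatrix ℝ *ᵥ x ≤ 1 - 1 / G.cliqueNum := by
  obtain ⟨y, hy, hycl, hxy⟩ := G.exists_isClique_support_le hx
  have hcard : #{i | y i ≠ 0} ≤ G.cliqueNum :=
    IsClique.card_le_cliqueNum (tc := by rw [coe_filter_univ]; exact hycl)
  have hCS : 1 ≤ (#{i | y i ≠ 0} : ℝ) * ∑ i, y i ^ 2 := by
    simpa [hy.2] using sq_sum_le_card_support_mul_sum_sq y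
  have hpos : (0 : ℝ) < #{i | y i ≠ 0} := by
    by_contra! h
    nlinarith [sum_nonneg fun i (_ : i ∈ univ) => sq_nonneg (y i)]
  calc x ⬝ᵥ G.adjMatrix ℝ *ᵥ x ≤ y ⬝ᵥ G.adjMatrix ℝ *ᵥ y := hxy
    _ = 1 - ∑ i, y i ^ 2 := by rw [dotProduct_adjMatrix_mulVec_of_isClique_support hycl, hy.2]; ring
    _ ≤ 1 - 1 / #{i | y i ≠ 0} := by
      gcongr
      rwa [div_le_iff₀ hpos, mul_comm]
    _ ≤ 1 - 1 / G.cliqueNum := by gcongr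

theorem IsNClique.exists_mem_stdSimplex_dotProduct_adjMatrix_mulVec_eq {n : ℕ} {s : Finset V}
    (hs : G.IsNClique n s) (hn : 0 < n) :
    ∃ x ∈ stdSimplex ℝ V, x ⬝ᵥ G.adjMatrix ℝ *ᵥ x = 1 - 1 / n := by
  classical
  set x : V → ℝ := fun i => if i ∈ s then (n : ℝ)⁻¹ else 0
  have hn' : (n : ℝ) ≠ 0 := by positivity
  have hsum : ∑ i, x i = 1 := by simp [x, hs.card_eq, hn']
  have hcl : G.IsClique (Function.support x) :=
    hs.isClique.subset fun i hi => Finset.mem_coe.2 (by simp [x] at hi; exact hi.1)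
  refine ⟨x, ⟨fun i => by positivity, hsum⟩, ?_⟩
  rw [dotProduct_adjMatrix_mulVec_of_isClique_support hcl, hsum]
  simp [x, ite_pow, hs.card_eq]
  field_simp

end SimpleGraph

/-- Motzkin–Straus: if A is the adjacency matrix of a finite simple graph g with
clique number w ≥ 1, then the maximum of xᵀAx over the probability simplex is
1 - 1/w. -/
theorem motzkin_straus (N : ℕ) (g : SimpleGraph (Fin N)) [DecidableRel g.Adj]
    (w : ℕ) (hw : 1 ≤ w)
    (hcl : ∃ s : Finset (Fin N), g.IsNClique w s)
    (hmax : ∀ (n : ℕ) (s : Finset (Fin N)), g.IsNClique n s → n ≤ w) :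
    IsGreatest
      {v : ℝ | ∃ x : Fin N → ℝ, (∀ i, 0 ≤ x i) ∧ (∑ i, x i = 1) ∧
        v = x ⬝ᵥ ((g.adjMatrix ℝ).mulVec x)}
      (1 - 1 / w) := by
  obtain ⟨s, hs⟩ := hcl
  have hω : g.cliqueNum = w := by
    obtain ⟨t, ht⟩ := g.exists_isNClique_cliqueNum
    exact le_antisymm (hmax _ _ ht) (hs.card_eq ▸ hs.isClique.card_le_cliqueNum)
  refine ⟨?_, ?_⟩
  · obtain ⟨x, hx, hfx⟩ := hs.exists_mem_stdSimplex_dotProduct_adjMatrix_mulVec_eq hw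
    exact ⟨x, hx.1, hx.2, hfx.symm⟩
  · rintro _ ⟨x, hx0, hx1, rfl⟩
    exact hω ▸ SimpleGraph.dotProduct_adjMatrix_mulVec_le_one_sub_one_div_cliqueNum ⟨hx0, hx1⟩
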